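/- Let n >= 3 and 5 <= k <= n-1, and let G = K_n minus the edges of a simple k-cycle on k of the n vertices. Then for every cyclic order sigma of the vertices of G, some non-edge of G has no candidate gap with respect to sigma. -/
import Mathlib


open SimpleGraph

set_option linter.unusedSectionVars false
set_option linter.unusedVariables false

/-- Clockwise distance from position `x` to position `v` in the cyclic order `ZMod n`. -/
def relpos {n : ℕ} (x v : ZMod n) : ℕ := (v - x).val

/-- `(v, v+1)` is a candidate gap for the non-edge `{x,y}` (arc taken clockwise from
`x` to `y`): the consecutive vertices `v, v+1` are non-adjacent, `[v, v+1] ⊆ [x, y]`,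
and no edge of `G` joins a vertex of `[x, v]` to a vertex of `[v+1, y]`. -/
def CandidateGap {n : ℕ} (G : SimpleGraph (ZMod n)) (x y v : ZMod n) : Prop :=
  ¬ G.Adj v (v + 1) ∧
  relpos x v < relpos x (v + 1) ∧
  relpos x (v + 1) ≤ relpos x y ∧
  ∀ u w : ZMod n, relpos x u ≤ relpos x v → relpos (v + 1) w ≤ relpos (v + 1) y →
    ¬ G.Adj u w

/-- The gap condition: every non-edge has a candidate gap (on one of its two arcs). -/
def GapCondition {n : ℕ} (G : SimpleGraph (ZMod n)) : Prop :=
  ∀ x y : ZMod n, x ≠ y → ¬ G.Adj x y →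
    ∃ v : ZMod n, CandidateGap G x y v ∨ CandidateGap G y x v

/-- Vertex `v` has the consecutive-neighbors property: its neighbors occupy
circularly consecutive positions `a, a+1, …, a+k-1`. -/
def CNP {n : ℕ} (G : SimpleGraph (ZMod n)) (v : ZMod n) : Prop :=
  ∃ (a : ZMod n) (k : ℕ), ∀ w : ZMod n,
    G.Adj v w ↔ ∃ i : ℕ, i < k ∧ w = a + (i : ZMod n)

section RP
variable {n : ℕ} [NeZero n]

lemma relpos_lt (x y : ZMod n) : relpos x y < n := ZMod.val_lt _

lemma relpos_self (x : ZMod n) : relpos x x = 0 := by simp [relpos]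

lemma relpos_eq_zero {x y : ZMod n} (h : relpos x y = 0) : y = x := by
  have : y - x = 0 := (ZMod.val_eq_zero (y - x)).mp h
  linear_combination this

lemma relpos_add (x : ZMod n) (s : ℕ) (hs : s < n) : relpos x (x + (s : ZMod n)) = s := by
  simp [relpos, add_sub_cancel_left, ZMod.val_natCast, Nat.mod_eq_of_lt hs]

lemma eq_add_relpos (x y : ZMod n) : y = x + ((relpos x y : ℕ) : ZMod n) := by
  rw [relpos, ZMod.natCast_zmod_val]
  ring

lemma relpos_inj {h u w : ZMod n} (he : relpos h u = relpos h w) : u = w := by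
  have h1 := eq_add_relpos h u
  have h2 := eq_add_relpos h w
  rw [he] at h1
  exact h1.trans h2.symm

lemma relpos_succ (h u : ZMod n) (hn : 1 < n) (hu : u ≠ h) (hu1 : u + 1 ≠ h) :
    relpos h (u + 1) = relpos h u + 1 := by
  have hv : relpos h u < n := relpos_lt h u
  have hne : relpos h u ≠ n - 1 := by
    intro he
    apply hu1
    have h2 := eq_add_relpos h u
    rw [he] at h2
    rw [h2]
    have h3 : ((n - 1 : ℕ) : ZMod n) = -1 := by
      have h4 : ((n : ℕ) : ZMod n) = 0 := ZMod.natCast_self n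
      push_cast [Nat.cast_sub (by omega : 1 ≤ n)]
      rw [h4]; ring
    rw [h3]; ring
  show (u + 1 - h).val = (u - h).val + 1
  have he : u + 1 - h = (u - h) + 1 := by ring
  have hone : (1 : ZMod n).val = 1 := by
    rw [ZMod.val_one_eq_one_mod, Nat.mod_eq_of_lt hn]
  simp only [relpos] at hv hne
  rw [he, ZMod.val_add, hone, Nat.mod_eq_of_lt (by omega)]

lemma cast_ne_zero' {k : ℕ} [NeZero k] (t : ℕ) (h0 : 0 < t) (ht : t < k) :
    ((t : ℕ) : ZMod k) ≠ 0 := by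
  intro h
  have := (ZMod.natCast_eq_zero_iff t k).mp h
  have := Nat.le_of_dvd h0 this
  omega

end RP

lemma final {k : ℕ} [NeZero k] (hk : 5 ≤ k) (r : ZMod k → ℕ) (rinj : Function.Injective r)
    (hstep : ∀ i : ZMod k,
      (r (i+1) = r i + 1) ∨ (r i = r (i+1) + 1) ∨
      (r (i+1) = r i + 2 ∧ (r (i-1) = r i + 1 ∨ r (i+2) = r i + 1)) ∨
      (r i = r (i+1) + 2 ∧ (r (i-1) = r (i+1) + 1 ∨ r (i+2) = r (i+1) + 1))) :
    False := by
  obtain ⟨i0, -, hmin⟩ := Finset.exists_min_image (Finset.univ : Finset (ZMod k)) r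
    ⟨0, Finset.mem_univ 0⟩
  simp only [Finset.mem_univ, forall_true_left, true_implies] at hmin
  -- index distinctness facts
  have idx : ∀ (a b : ZMod k) (t : ℕ), 0 < t → t < k → a + (t : ZMod k) = b → r a ≠ r b := by
    intro a b t h0 ht hab h
    have : a = b := rinj h
    rw [this] at hab
    exact cast_ne_zero' t h0 ht (by linear_combination hab)
  have d2a : r (i0-1) ≠ r (i0+1) := idx _ _ 2 (by norm_num) (by omega) (by push_cast; ring)
  have d2b : r (i0-2) ≠ r i0 := idx _ _ 2 (by norm_num) (by omega) (by push_cast; ring)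
  have d2c : r i0 ≠ r (i0+2) := idx _ _ 2 (by norm_num) (by omega) (by push_cast; ring)
  have d3a : r (i0-2) ≠ r (i0+1) := idx _ _ 3 (by norm_num) (by omega) (by push_cast; ring)
  have d3b : r (i0-1) ≠ r (i0+2) := idx _ _ 3 (by norm_num) (by omega) (by push_cast; ring)
  have d4a : r (i0-3) ≠ r (i0+1) := idx _ _ 4 (by norm_num) (by omega) (by push_cast; ring)
  have d4b : r (i0-1) ≠ r (i0+3) := idx _ _ 4 (by norm_num) (by omega) (by push_cast; ring)
  -- neighbors of the minimum
  have m1 := hmin (i0+1)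
  have m2 := hmin (i0-1)
  have m3 := hmin (i0-2)
  have m4 := hmin (i0+2)
  have s0 := hstep i0
  have s1 := hstep (i0-1)
  rw [show i0 - 1 + 1 = i0 from by ring, show i0 - 1 - 1 = i0 - 2 from by ring,
    show i0 - 1 + 2 = i0 + 1 from by ring] at s1
  -- r (i0+1) ∈ {m+1, m+2}, r (i0-1) ∈ {m+1, m+2}, distinct
  have hp : r (i0+1) = r i0 + 1 ∨ r (i0+1) = r i0 + 2 := by
    rcases s0 with h | h | ⟨h, -⟩ | ⟨h, -⟩ <;> omega
  have hq : r (i0-1) = r i0 + 1 ∨ r (i0-1) = r i0 + 2 := by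
    rcases s1 with h | h | ⟨h, -⟩ | ⟨h, -⟩ <;> omega
  rcases hp with hp | hp
  · -- case B : r(i0+1) = m+1, so r(i0-1) = m+2 ; use step at i0+1
    have hq2 : r (i0-1) = r i0 + 2 := by omega
    have s2 := hstep (i0+1)
    rw [show i0 + 1 + 1 = i0 + 2 from by ring, show i0 + 1 - 1 = i0 from by ring,
      show i0 + 1 + 2 = i0 + 3 from by ring] at s2
    rcases s2 with h | h | ⟨h, h' | h'⟩ | ⟨h, h' | h'⟩ <;> omega
  · -- case A : r(i0+1) = m+2, so r(i0-1) = m+1 ; use step at i0-2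
    have hq2 : r (i0-1) = r i0 + 1 := by omega
    have s3 := hstep (i0-2)
    rw [show i0 - 2 + 1 = i0 - 1 from by ring, show i0 - 2 - 1 = i0 - 3 from by ring,
      show i0 - 2 + 2 = i0 from by ring] at s3
    rcases s3 with h | h | ⟨h, h' | h'⟩ | ⟨h, h' | h'⟩ <;> omega


lemma add_cast_ne {n : ℕ} [NeZero n] (z : ZMod n) {s t : ℕ} (hs : s < n) (ht : t < n)
    (hst : s ≠ t) : z + (s : ZMod n) ≠ z + (t : ZMod n) := by
  intro h
  have h2 : (s : ZMod n) = t := by linear_combination h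
  have h3 := congrArg ZMod.val h2
  rw [ZMod.val_natCast, ZMod.val_natCast, Nat.mod_eq_of_lt hs, Nat.mod_eq_of_lt ht] at h3
  exact hst h3

section G
variable {n k : ℕ} [NeZero n] [NeZero k]
  (H : SimpleGraph (ZMod n)) (d : ZMod k → ZMod n)
  (hdinj : Function.Injective d)
  (hchar : ∀ u w : ZMod n, ¬ H.Adj u w ↔ u = w ∨
    ∃ i : ZMod k, (u = d i ∧ w = d (i+1)) ∨ (w = d i ∧ u = d (i+1)))

include hdinj hchar

lemma nonnbr {j : ZMod k} {w : ZMod n} (hw : w ≠ d j) (h : ¬ H.Adj (d j) w) :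
    w = d (j - 1) ∨ w = d (j + 1) := by
  rcases (hchar _ _).mp h with h' | ⟨i, ⟨hu, hw'⟩ | ⟨hw', hu⟩⟩
  · exact absurd h'.symm hw
  · right; rw [hw', hdinj hu]
  · left
    have : i = j - 1 := by rw [hdinj hu]; ring
    rw [hw', this]

lemma three (hk : 5 ≤ k) (u w1 w2 w3 : ZMod n)
    (h1 : ¬ H.Adj u w1) (h2 : ¬ H.Adj u w2) (h3 : ¬ H.Adj u w3)
    (hw1 : w1 ≠ u) (hw2 : w2 ≠ u) (hw3 : w3 ≠ u)
    (h12 : w1 ≠ w2) (h13 : w1 ≠ w3) (h23 : w2 ≠ w3) : False := by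
  -- u is a cycle vertex
  obtain ⟨j, rfl⟩ : ∃ j, u = d j := by
    rcases (hchar _ _).mp h1 with h' | ⟨i, ⟨hu, -⟩ | ⟨-, hu⟩⟩
    · exact absurd h'.symm hw1
    · exact ⟨i, hu⟩
    · exact ⟨i + 1, hu⟩
  have n1 := nonnbr H d hdinj hchar hw1 h1
  have n2 := nonnbr H d hdinj hchar hw2 h2
  have n3 := nonnbr H d hdinj hchar hw3 h3
  rcases n1 with n1 | n1 <;> rcases n2 with n2 | n2 <;> rcases n3 with n3 | n3 <;>
    simp_all

lemma pairnbr {z w w' : ZMod n} (hzw : z ≠ w) (hzw' : z ≠ w') (hww' : w ≠ w')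
    (h1 : ¬ H.Adj z w) (h2 : ¬ H.Adj z w') :
    ∃ (a e : ZMod k), (e = 1 ∨ e = -1) ∧ z = d a ∧ w = d (a + e) ∧ w' = d (a - e) := by
  obtain ⟨a, e, he, hza, hw⟩ :
      ∃ (a e : ZMod k), (e = 1 ∨ e = -1) ∧ z = d a ∧ w = d (a + e) := by
    rcases (hchar _ _).mp h1 with h' | ⟨i, ⟨hu, hw'⟩ | ⟨hw', hu⟩⟩
    · exact absurd h' hzw
    · exact ⟨i, 1, Or.inl rfl, hu, hw'⟩
    · exact ⟨i + 1, -1, Or.inr rfl, hu, by rw [hw']; congr 1; ring⟩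
  have h3 : w' = d (a - 1) ∨ w' = d (a + 1) := by
    apply nonnbr H d hdinj hchar
    · rw [← hza]; exact fun hc => hzw' hc.symm
    · rw [← hza]; exact h2
  refine ⟨a, e, he, hza, hw, ?_⟩
  rcases he with rfl | rfl
  · rcases h3 with h3 | h3
    · exact h3
    · exact absurd (hw.trans h3.symm) hww'
  · rcases h3 with h3 | h3
    · exact absurd (hw.trans (by rw [h3]; congr 1; ring)) hww'
    · rw [h3]; congr 1; ring

lemma quad (hk : 5 ≤ k) (x : ZMod n)
    (ne01 : x ≠ x + 1) (ne02 : x ≠ x + 2) (ne03 : x ≠ x + 3)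
    (ne12 : x + 1 ≠ x + 2) (ne13 : x + 1 ≠ x + 3) (ne23 : x + 2 ≠ x + 3)
    (h02 : ¬ H.Adj x (x+2)) (h03 : ¬ H.Adj x (x+3))
    (h12 : ¬ H.Adj (x+1) (x+2)) (h13 : ¬ H.Adj (x+1) (x+3)) : False := by
  obtain ⟨a, e, he, hxa, ha2, ha3⟩ :=
    pairnbr H d hdinj hchar ne02 ne03 ne23 h02 h03
  obtain ⟨b, f, hf, hxb, hb2, hb3⟩ :=
    pairnbr H d hdinj hchar ne12 ne13 ne23 h12 h13
  have q1 : a + e = b + f := hdinj (ha2.symm.trans hb2)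
  have q2 : a - e = b - f := hdinj (ha3.symm.trans hb3)
  have h4 : ((4 : ℕ) : ZMod k) ≠ 0 := cast_ne_zero' 4 (by norm_num) (by omega)
  have h4' : ((4 : ℕ) : ZMod k) = (4 : ZMod k) := by norm_cast
  rcases he with rfl | rfl <;> rcases hf with rfl | rfl
  · exact ne01 (hxa.trans (by rw [add_right_cancel q1]; exact hxb.symm))
  · exact h4 (by rw [h4']; linear_combination q1 - q2)
  · exact h4 (by rw [h4']; linear_combination q2 - q1)
  · exact ne01 (hxa.trans (by rw [add_right_cancel q1]; exact hxb.symm))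

lemma analysis (hn : 6 ≤ n) (hk : 5 ≤ k) (x y v : ZMod n) (hxy : x ≠ y)
    (hcg : CandidateGap H x y v) :
    relpos x y = 1 ∨ (relpos x y = 2 ∧ (¬ H.Adj x (x+1) ∨ ¬ H.Adj (x+1) (x+2))) := by
  obtain ⟨hvv, hlt, hle, hcross⟩ := hcg
  set R := relpos x y with hR
  set p := relpos x v with hp
  have hRn : R < n := relpos_lt x y
  have hR0 : R ≠ 0 := fun h => hxy (relpos_eq_zero h).symm
  have hpn : p < n := relpos_lt x v
  have hv : v = x + ((p : ℕ) : ZMod n) := eq_add_relpos x v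
  have hp' : relpos x (v+1) = p + 1 := by
    rcases eq_or_lt_of_le (show p + 1 ≤ n by omega) with he | hlt2
    · exfalso
      have hvx : v + 1 = x := by
        rw [hv]
        have h1 : ((p + 1 : ℕ) : ZMod n) = 0 := by rw [he]; exact ZMod.natCast_self n
        push_cast at h1
        linear_combination h1
      rw [hvx, relpos_self] at hlt
      omega
    · have h2 : v + 1 = x + ((p + 1 : ℕ) : ZMod n) := by rw [hv]; push_cast; ring
      rw [h2, relpos_add _ _ hlt2]
  have hpR : p + 1 ≤ R := hp' ▸ hle
  have hyx : y = x + ((R : ℕ) : ZMod n) := eq_add_relpos x y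
  have key : ∀ s t : ℕ, s ≤ p → p + 1 ≤ t → t ≤ R →
      ¬ H.Adj (x + (s : ZMod n)) (x + (t : ZMod n)) := by
    intro s t hs ht1 ht2
    apply hcross
    · rw [relpos_add _ _ (by omega)]
      exact hs
    · have hv1 : v + 1 = x + ((p + 1 : ℕ) : ZMod n) := by rw [hv]; push_cast; ring
      have h1 : relpos (v+1) (x + (t : ZMod n)) = t - (p+1) := by
        have h2 : x + (t : ZMod n) = (v+1) + ((t - (p+1) : ℕ) : ZMod n) := by
          rw [hv1]; push_cast [Nat.cast_sub (show p+1 ≤ t from ht1)]; ring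
        rw [h2, relpos_add _ _ (by omega)]
      have h2 : relpos (v+1) y = R - (p+1) := by
        have h3 : y = (v+1) + ((R - (p+1) : ℕ) : ZMod n) := by
          rw [hyx, hv1]; push_cast [Nat.cast_sub hpR]; ring
        rw [h3, relpos_add _ _ (by omega)]
      rw [h1, h2]
      omega
  have hds : ∀ s t : ℕ, s < n → t < n → s ≠ t →
      x + (s : ZMod n) ≠ x + (t : ZMod n) := by
    intro s t hsn htn hst h
    have h2 : (s : ZMod n) = t := by linear_combination h
    have h3 := congrArg ZMod.val h2
    rw [ZMod.val_natCast, ZMod.val_natCast, Nat.mod_eq_of_lt hsn,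
      Nat.mod_eq_of_lt htn] at h3
    exact hst h3
  have hple : p ≤ 1 := by
    by_contra hgt
    push_neg at hgt
    have k0 := key 0 R (by omega) (by omega) le_rfl
    have k1 := key 1 R (by omega) (by omega) le_rfl
    have k2 := key 2 R (by omega) (by omega) le_rfl
    exact three H d hdinj hchar hk (x + (R : ZMod n)) _ _ _
      (fun h => k0 h.symm) (fun h => k1 h.symm) (fun h => k2 h.symm)
      (hds 0 R (by omega) (by omega) (by omega))
      (hds 1 R (by omega) (by omega) (by omega))
      (hds 2 R (by omega) (by omega) (by omega))
      (hds 0 1 (by omega) (by omega) (by omega))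
      (hds 0 2 (by omega) (by omega) (by omega))
      (hds 1 2 (by omega) (by omega) (by omega))
  have hRle : R ≤ p + 2 := by
    by_contra hgt
    push_neg at hgt
    have k1 := key 0 (p+1) (by omega) (by omega) (by omega)
    have k2 := key 0 (p+2) (by omega) (by omega) (by omega)
    have k3 := key 0 (p+3) (by omega) (by omega) (by omega)
    exact three H d hdinj hchar hk (x + ((0:ℕ) : ZMod n)) _ _ _ k1 k2 k3
      (hds (p+1) 0 (by omega) (by omega) (by omega))
      (hds (p+2) 0 (by omega) (by omega) (by omega))
      (hds (p+3) 0 (by omega) (by omega) (by omega))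
      (hds (p+1) (p+2) (by omega) (by omega) (by omega))
      (hds (p+1) (p+3) (by omega) (by omega) (by omega))
      (hds (p+2) (p+3) (by omega) (by omega) (by omega))
  rcases Nat.lt_or_ge R 2 with hR1 | hR2
  · left; omega
  · rcases eq_or_lt_of_le hR2 with hR2' | hR3
    · right
      refine ⟨hR2'.symm, ?_⟩
      rcases Nat.eq_zero_or_pos p with hp0 | hp1
      · left
        have := key 0 1 (by omega) (by omega) (by omega)
        simpa using this
      · right
        have := key 1 2 (by omega) (by omega) (by omega)
        simpa using this
    · exfalso
      have k02 := key 0 2 (by omega) (by omega) (by omega)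
      have k03 := key 0 3 (by omega) (by omega) (by omega)
      have k12 := key 1 2 (by omega) (by omega) (by omega)
      have k13 := key 1 3 (by omega) (by omega) (by omega)
      exact quad H d hdinj hchar hk x
        (by simpa using hds 0 1 (by omega) (by omega) (by omega))
        (by simpa using hds 0 2 (by omega) (by omega) (by omega))
        (by simpa using hds 0 3 (by omega) (by omega) (by omega))
        (by simpa using hds 1 2 (by omega) (by omega) (by omega))
        (by simpa using hds 1 3 (by omega) (by omega) (by omega))
        (by simpa using hds 2 3 (by omega) (by omega) (by omega))
        (by simpa using k02) (by simpa using k03)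
        (by simpa using k12) (by simpa using k13)

lemma main_aux (hn : 6 ≤ n) (hk : 5 ≤ k) (hkn : k < n) (hgap : GapCondition H) :
    False := by
  have hone : (1 : ZMod k) ≠ 0 := by
    have := cast_ne_zero' (k := k) 1 one_pos (by omega)
    simpa using this
  have hn1 : ∀ z : ZMod n, z + 1 ≠ z := by
    intro z
    have := add_cast_ne (n := n) z (s := 1) (t := 0) (by omega) (by omega) (by omega)
    simpa using this
  have h12 : ∀ z : ZMod n, z + 1 ≠ z + 2 := by
    intro z
    have := add_cast_ne (n := n) z (s := 1) (t := 2) (by omega) (by omega) (by omega)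
    simpa using this
  have hdi : ∀ i : ZMod k, d i ≠ d (i + 1) := by
    intro i h
    have h2 := hdinj h
    exact hone (by linear_combination -h2)
  have hstepd : ∀ i : ZMod k,
      (d (i+1) = d i + 1) ∨ (d i = d (i+1) + 1) ∨
      (d (i+1) = d i + 2 ∧ (d i + 1 = d (i-1) ∨ d i + 1 = d (i+2))) ∨
      (d i = d (i+1) + 2 ∧ (d (i+1) + 1 = d (i-1) ∨ d (i+1) + 1 = d (i+2))) := by
    intro i
    have hxy : d i ≠ d (i+1) := hdi i
    have hnadj : ¬ H.Adj (d i) (d (i+1)) := (hchar _ _).mpr (Or.inr ⟨i, Or.inl ⟨rfl, rfl⟩⟩)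
    obtain ⟨v, hv | hv⟩ := hgap (d i) (d (i+1)) hxy hnadj
    · rcases analysis H d hdinj hchar hn hk _ _ v hxy hv with h1 | ⟨h2, hmid⟩
      · left
        have := eq_add_relpos (d i) (d (i+1))
        rw [h1] at this
        simpa using this
      · right; right; left
        have hy2 : d (i+1) = d i + 2 := by
          have := eq_add_relpos (d i) (d (i+1))
          rw [h2] at this
          simpa using this
        refine ⟨hy2, ?_⟩
        rcases hmid with hmadj | hmadj
        · left
          have hmw : d i + 1 ≠ d i := fun h => hn1 (d i) h
          rcases nonnbr H d hdinj hchar hmw hmadj with h | h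
          · exact h
          · exfalso
            rw [hy2] at h
            exact h12 (d i) h
        · right
          have hmadj' : ¬ H.Adj (d (i+1)) (d i + 1) := by
            intro h
            exact hmadj (by rw [← hy2]; exact h.symm)
          have hmw : d i + 1 ≠ d (i+1) := by rw [hy2]; exact h12 (d i)
          rcases nonnbr H d hdinj hchar hmw hmadj' with h | h
          · exfalso
            rw [show i + 1 - 1 = i from by ring] at h
            exact hn1 (d i) h
          · rw [show i + 1 + 1 = i + 2 from by ring] at h
            exact h
    · rcases analysis H d hdinj hchar hn hk _ _ v hxy.symm hv with h1 | ⟨h2, hmid⟩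
      · right; left
        have := eq_add_relpos (d (i+1)) (d i)
        rw [h1] at this
        simpa using this
      · right; right; right
        have hy2 : d i = d (i+1) + 2 := by
          have := eq_add_relpos (d (i+1)) (d i)
          rw [h2] at this
          simpa using this
        refine ⟨hy2, ?_⟩
        rcases hmid with hmadj | hmadj
        · right
          have hmw : d (i+1) + 1 ≠ d (i+1) := fun h => hn1 (d (i+1)) h
          rcases nonnbr H d hdinj hchar hmw hmadj with h | h
          · exfalso
            rw [show i + 1 - 1 = i from by ring, hy2] at h
            exact h12 (d (i+1)) h
          · rw [show i + 1 + 1 = i + 2 from by ring] at h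
            exact h
        · left
          have hmadj' : ¬ H.Adj (d i) (d (i+1) + 1) := by
            intro h
            exact hmadj (by rw [← hy2]; exact h.symm)
          have hmw : d (i+1) + 1 ≠ d i := by rw [hy2]; exact h12 (d (i+1))
          rcases nonnbr H d hdinj hchar hmw hmadj' with h | h
          · exact h
          · exfalso
            exact hn1 (d (i+1)) h
  obtain ⟨h0, hh⟩ : ∃ h0 : ZMod n, ∀ i, d i ≠ h0 := by
    by_contra hc
    push_neg at hc
    have hsurj : Function.Surjective d := fun b => hc b
    have hcard := Fintype.card_le_of_surjective d hsurj
    rw [ZMod.card, ZMod.card] at hcard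
    omega
  apply final hk (fun i => relpos h0 (d i)) (fun a b h => hdinj (relpos_inj h))
  intro i
  have hgt1 : 1 < n := by omega
  rcases hstepd i with h | h | ⟨h, hm⟩ | ⟨h, hm⟩
  · left
    show relpos h0 (d (i+1)) = relpos h0 (d i) + 1
    rw [h]
    exact relpos_succ h0 (d i) hgt1 (hh i) (h ▸ hh (i+1))
  · right; left
    show relpos h0 (d i) = relpos h0 (d (i+1)) + 1
    rw [h]
    exact relpos_succ h0 (d (i+1)) hgt1 (hh (i+1)) (h ▸ hh i)
  · right; right; left
    have hmid : d i + 1 ≠ h0 := by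
      rcases hm with hm | hm <;> rw [hm]
      · exact hh (i-1)
      · exact hh (i+2)
    have e1 : relpos h0 (d i + 1) = relpos h0 (d i) + 1 :=
      relpos_succ h0 (d i) hgt1 (hh i) hmid
    have e2 : relpos h0 (d i + 1 + 1) = relpos h0 (d i + 1) + 1 := by
      apply relpos_succ h0 _ hgt1 hmid
      have h3 : d i + 1 + 1 = d (i + 1) := by rw [h]; ring
      rw [h3]
      exact hh (i+1)
    constructor
    · show relpos h0 (d (i+1)) = relpos h0 (d i) + 2
      rw [h, show (d i + 2 : ZMod n) = d i + 1 + 1 from by ring, e2, e1]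
    · rcases hm with hm | hm
      · left
        show relpos h0 (d (i-1)) = relpos h0 (d i) + 1
        rw [← hm]
        exact e1
      · right
        show relpos h0 (d (i+2)) = relpos h0 (d i) + 1
        rw [← hm]
        exact e1
  · right; right; right
    have hmid : d (i+1) + 1 ≠ h0 := by
      rcases hm with hm | hm <;> rw [hm]
      · exact hh (i-1)
      · exact hh (i+2)
    have e1 : relpos h0 (d (i+1) + 1) = relpos h0 (d (i+1)) + 1 :=
      relpos_succ h0 (d (i+1)) hgt1 (hh (i+1)) hmid
    have e2 : relpos h0 (d (i+1) + 1 + 1) = relpos h0 (d (i+1) + 1) + 1 := by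
      apply relpos_succ h0 _ hgt1 hmid
      have h3 : d (i+1) + 1 + 1 = d i := by rw [h]; ring
      rw [h3]
      exact hh i
    constructor
    · show relpos h0 (d i) = relpos h0 (d (i+1)) + 2
      rw [h, show (d (i+1) + 2 : ZMod n) = d (i+1) + 1 + 1 from by ring, e2, e1]
    · rcases hm with hm | hm
      · left
        show relpos h0 (d (i-1)) = relpos h0 (d (i+1)) + 1
        rw [← hm]
        exact e1
      · right
        show relpos h0 (d (i+2)) = relpos h0 (d (i+1)) + 1
        rw [← hm]
        exact e1

end G

/-- For `3 ≤ n`, `5 ≤ k ≤ n-1` and `G = Kₙ` minus the edges of a simple `k`-cycle,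
every cyclic order of the vertices of `G` leaves some non-edge without a candidate gap. -/
theorem stmt_6 {V : Type*} [Fintype V] (n k : ℕ)
    (hcard : Fintype.card V = n) (hn : 3 ≤ n) (hk5 : 5 ≤ k) (hkn : k ≤ n - 1)
    (c : ZMod k ↪ V) (G : SimpleGraph V)
    (hG : G = (⊤ : SimpleGraph V) \
      SimpleGraph.fromEdgeSet {e | ∃ i : ZMod k, e = s(c i, c (i + 1))}) :
    ∀ σ : V ≃ ZMod n, ¬ GapCondition (G.map σ.toEmbedding) := by
  subst hG
  intro σ hgap
  have hn6 : 6 ≤ n := by omega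
  haveI : NeZero n := ⟨by omega⟩
  haveI : NeZero k := ⟨by omega⟩
  set d : ZMod k → ZMod n := fun i => σ (c i) with hd
  have hdinj : Function.Injective d := fun a b h => c.injective (σ.injective h)
  set S : Set (Sym2 V) := {e | ∃ i : ZMod k, e = s(c i, c (i + 1))} with hS
  set H := (((⊤ : SimpleGraph V) \ SimpleGraph.fromEdgeSet S).map σ.toEmbedding) with hH
  have hmap : ∀ u w : ZMod n, H.Adj u w ↔
      ((⊤ : SimpleGraph V) \ SimpleGraph.fromEdgeSet S).Adj (σ.symm u) (σ.symm w) := by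
    intro u w
    rw [hH, SimpleGraph.map_adj]
    constructor
    · rintro ⟨a, b, hab, rfl, rfl⟩
      simpa using hab
    · intro h
      exact ⟨σ.symm u, σ.symm w, h, σ.apply_symm_apply u, σ.apply_symm_apply w⟩
  have hchar : ∀ u w : ZMod n, ¬ H.Adj u w ↔
      u = w ∨ ∃ i : ZMod k, (u = d i ∧ w = d (i+1)) ∨ (w = d i ∧ u = d (i+1)) := by
    intro u w
    rw [hmap, SimpleGraph.sdiff_adj, SimpleGraph.top_adj, SimpleGraph.fromEdgeSet_adj]
    have hcast : ∀ i : ZMod k, (σ.symm u = c i ↔ u = d i) ∧ (σ.symm w = c i ↔ w = d i) ∧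
        (σ.symm u = c (i+1) ↔ u = d (i+1)) ∧ (σ.symm w = c (i+1) ↔ w = d (i+1)) := by
      intro i
      exact ⟨σ.symm_apply_eq, σ.symm_apply_eq, σ.symm_apply_eq, σ.symm_apply_eq⟩
    have huw : σ.symm u = σ.symm w ↔ u = w := by
      constructor
      · intro h; have := congrArg σ h; simpa using this
      · intro h; rw [h]
    constructor
    · intro h
      by_cases he : u = w
      · exact Or.inl he
      · right
        have hne : σ.symm u ≠ σ.symm w := fun hc => he (huw.mp hc)
        have hmem : s(σ.symm u, σ.symm w) ∈ S := by
          by_contra hns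
          exact h ⟨hne, fun hc => hns hc.1⟩
        obtain ⟨i, hi⟩ := hmem
        rw [Sym2.eq_iff] at hi
        rcases hi with ⟨h1, h2⟩ | ⟨h1, h2⟩
        · exact ⟨i, Or.inl ⟨(hcast i).1.mp h1, (hcast i).2.2.2.mp h2⟩⟩
        · exact ⟨i, Or.inr ⟨(hcast i).2.1.mp h2, (hcast i).2.2.1.mp h1⟩⟩
    · intro h hadj
      obtain ⟨hne, hns⟩ := hadj
      rcases h with h | ⟨i, ⟨h1, h2⟩ | ⟨h1, h2⟩⟩
      · exact hne (by rw [h])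
      · refine hns ⟨⟨i, ?_⟩, hne⟩
        rw [Sym2.eq_iff]
        exact Or.inl ⟨(hcast i).1.mpr h1, (hcast i).2.2.2.mpr h2⟩
      · refine hns ⟨⟨i, ?_⟩, hne⟩
        rw [Sym2.eq_iff]
        exact Or.inr ⟨(hcast i).2.2.1.mpr h2, (hcast i).2.1.mpr h1⟩
  exact main_aux H d hdinj hchar hn6 hk5 (by omega) hgap
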